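/- Let ρ, σ be density matrices and 0 < α < 1. With Q_α(ρ‖σ) := (1-α)∫₀^∞ γ^{α-2} Tr[ρ{ρ ≤ γσ}] dγ, the bound Tr[ρ {ρ ≤ cσ}] ≤ c^{1-α} Q_α(ρ‖σ) holds for every c > 0, equivalently 1 - Tr[ρ{ρ > cσ}] ≤ e^{(1-α)log c + (α-1)D_α(ρ‖σ)}. -/

import Mathlib

open MeasureTheory Matrix
open scoped ComplexOrder
noncomputable section

/-- The positive part `(X)₊` of a Hermitian matrix, via continuous functional calculus. -/
def mposPart {n : ℕ} (X : Matrix (Fin n) (Fin n) ℂ) : Matrix (Fin n) (Fin n) ℂ :=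
  cfc (fun x : ℝ => max x 0) X

/-- The spectral projection of a Hermitian matrix onto its strictly positive part,
so that `projPos (A - γ • B)` is the projection `{A > γB}`. -/
def projPos {n : ℕ} (X : Matrix (Fin n) (Fin n) ℂ) : Matrix (Fin n) (Fin n) ℂ :=
  cfc (fun x : ℝ => if 0 < x then (1:ℝ) else 0) X

/-- The spectral projection of a Hermitian matrix onto its nonnegative part,
so that `projNonneg (γ • B - A)` is the projection `{A ≤ γB}`. -/
def projNonneg {n : ℕ} (X : Matrix (Fin n) (Fin n) ℂ) : Matrix (Fin n) (Fin n) ℂ :=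
  cfc (fun x : ℝ => if 0 ≤ x then (1:ℝ) else 0) X

/-- Matrix logarithm via functional calculus. -/
def mlog {n : ℕ} (X : Matrix (Fin n) (Fin n) ℂ) : Matrix (Fin n) (Fin n) ℂ :=
  cfc Real.log X

/-- Real matrix power via functional calculus (`Real.rpow`, so negative powers of
positive semidefinite matrices are taken on the support). -/
def mpow {n : ℕ} (X : Matrix (Fin n) (Fin n) ℂ) (a : ℝ) : Matrix (Fin n) (Fin n) ℂ :=
  cfc (fun x : ℝ => x ^ a) X


/-!
Write `f γ = Tr[ρ {ρ ≤ γσ}]`. Writing `X = X₊ - X₋` shows that `{X ≥ 0}` maximises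
`M ↦ Tr[X M]` over `0 ≤ M ≤ 1`; comparing this optimality for `{ρ ≤ γσ}` and `{ρ ≤ γ'σ}` shows
that `f` is nondecreasing on `[0, ∞)`, and the case `M = 0` gives `f γ ≤ γ Tr[σ {ρ ≤ γσ}] ≤ γ`.
Together with `f ≤ 1` this makes `γ ^ (α - 2) f γ` integrable on `(0, ∞)`, and monotonicity gives
the Markov-type bound `f c ∫_c^∞ γ ^ (α - 2) dγ ≤ ∫_0^∞ γ ^ (α - 2) f γ dγ`, where
`∫_c^∞ γ ^ (α - 2) dγ = c ^ (α - 1) / (1 - α)`. The second inequality is the first one rewritten,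
since `{ρ > cσ} = 1 - {ρ ≤ cσ}`.
-/

open scoped MatrixOrder

namespace Matrix

lemma PosSemidef.trace_mul_re_nonneg {ι : Type*} [Fintype ι] [DecidableEq ι]
    {A B : Matrix ι ι ℂ} (hA : A.PosSemidef) (hB : B.PosSemidef) : 0 ≤ (A * B).trace.re := by
  obtain ⟨C, rfl⟩ := CStarAlgebra.nonneg_iff_eq_star_mul_self.mp hB.nonneg
  rw [← mul_assoc, trace_mul_cycle]
  exact (Complex.nonneg_iff.mp (hA.mul_mul_conjTranspose_same C).trace_nonneg).1

lemma PosSemidef.trace_mul_re_le {ι : Type*} [Fintype ι] [DecidableEq ι] {A M : Matrix ι ι ℂ}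
    (hA : A.PosSemidef) (hM : M ≤ 1) : (A * M).trace.re ≤ A.trace.re := by
  have := hA.trace_mul_re_nonneg hM
  rwa [mul_sub, mul_one, trace_sub, Complex.sub_re, sub_nonneg] at this

lemma continuousOn_spectrum {ι : Type*} [Fintype ι] [DecidableEq ι] (X : Matrix ι ι ℂ)
    (f : ℝ → ℝ) : ContinuousOn f (spectrum ℝ X) :=
  X.finite_real_spectrum.continuousOn f

variable {n : ℕ}

lemma projNonneg_nonneg (X : Matrix (Fin n) (Fin n) ℂ) : 0 ≤ projNonneg X :=
  cfc_nonneg fun x _ => by split_ifs <;> norm_num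

lemma projNonneg_le_one (X : Matrix (Fin n) (Fin n) ℂ) : projNonneg X ≤ 1 :=
  cfc_le_one _ X fun x _ => by split_ifs <;> norm_num

lemma mposPart_nonneg (X : Matrix (Fin n) (Fin n) ℂ) : 0 ≤ mposPart X :=
  cfc_nonneg fun x _ => le_max_right x 0

lemma le_mposPart {X : Matrix (Fin n) (Fin n) ℂ} (hX : X.IsHermitian) : X ≤ mposPart X := by
  have hX' : IsSelfAdjoint X := hX
  conv_lhs => rw [← cfc_id' ℝ X]
  exact cfc_mono (fun x _ => le_max_left x 0) (continuousOn_spectrum X _)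
    (continuousOn_spectrum X _)

lemma mul_projNonneg {X : Matrix (Fin n) (Fin n) ℂ} (hX : X.IsHermitian) :
    X * projNonneg X = mposPart X := by
  have hX' : IsSelfAdjoint X := hX
  have hmax : (fun x : ℝ => max x 0) = fun x => x * (if 0 ≤ x then 1 else 0) := by
    ext x
    split_ifs with h <;> simp [h, le_of_not_ge]
  rw [projNonneg, mposPart, hmax,
    cfc_mul _ _ X (continuousOn_spectrum X _) (continuousOn_spectrum X _), cfc_id' ℝ X]

lemma trace_mul_re_le_trace_mul_projNonneg {X M : Matrix (Fin n) (Fin n) ℂ}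
    (hX : X.IsHermitian) (hM0 : 0 ≤ M) (hM1 : M ≤ 1) :
    (X * M).trace.re ≤ (X * projNonneg X).trace.re := by
  have hpos := (mposPart_nonneg X).posSemidef.trace_mul_re_le hM1
  have hneg := (le_iff.mp (le_mposPart hX)).trace_mul_re_nonneg hM0.posSemidef
  rw [mul_projNonneg hX]
  simp only [sub_mul, trace_sub, Complex.sub_re] at hneg
  linarith

lemma projPos_neg {X : Matrix (Fin n) (Fin n) ℂ} (hX : X.IsHermitian) :
    projPos (-X) = 1 - projNonneg X := by
  have hX' : IsSelfAdjoint X := hX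
  rw [projPos, ← cfc_comp_neg _ X ((X.finite_real_spectrum.image _).continuousOn _), projNonneg,
    ← cfc_one ℝ X, ← cfc_sub _ _ X (continuousOn_spectrum X _) (continuousOn_spectrum X _)]
  congr 1
  ext x
  split_ifs <;> first | rfl | linarith | norm_num

end Matrix

section DensityMatrix

open Matrix

variable {n : ℕ} {ρ σ : Matrix (Fin n) (Fin n) ℂ}

def traceProjNonneg (ρ σ : Matrix (Fin n) (Fin n) ℂ) (γ : ℝ) : ℝ :=
  (ρ * projNonneg (γ • σ - ρ)).trace.re

lemma isHermitian_smul_sub (hρ : ρ.IsHermitian) (hσ : σ.IsHermitian) (γ : ℝ) :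
    (γ • σ - ρ).IsHermitian :=
  (hσ.smul (.all γ)).sub hρ

lemma re_trace_smul_sub_mul (γ : ℝ) (M : Matrix (Fin n) (Fin n) ℂ) :
    ((γ • σ - ρ) * M).trace.re = γ * (σ * M).trace.re - (ρ * M).trace.re := by
  rw [sub_mul, smul_mul_assoc, trace_sub, trace_smul, Complex.sub_re, Complex.real_smul,
    Complex.re_ofReal_mul]

lemma traceProjNonneg_nonneg (hρ : ρ.PosSemidef) (γ : ℝ) : 0 ≤ traceProjNonneg ρ σ γ :=
  hρ.trace_mul_re_nonneg (projNonneg_nonneg _).posSemidef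

lemma traceProjNonneg_le_one (hρ : ρ.PosSemidef) (hρ1 : ρ.trace = 1) (γ : ℝ) :
    traceProjNonneg ρ σ γ ≤ 1 := by
  simpa [traceProjNonneg, hρ1] using hρ.trace_mul_re_le (projNonneg_le_one (γ • σ - ρ))

lemma traceProjNonneg_le_self (hρ : ρ.PosSemidef) (hσ : σ.PosSemidef) (hσ1 : σ.trace = 1)
    {γ : ℝ} (hγ : 0 ≤ γ) : traceProjNonneg ρ σ γ ≤ γ := by
  have hX := isHermitian_smul_sub hρ.1 hσ.1 γ
  have hP0 := trace_mul_re_le_trace_mul_projNonneg hX le_rfl zero_le_one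
  have hσP : (σ * projNonneg (γ • σ - ρ)).trace.re ≤ 1 := by
    simpa [hσ1] using hσ.trace_mul_re_le (projNonneg_le_one (γ • σ - ρ))
  rw [mul_zero, trace_zero, Complex.zero_re, re_trace_smul_sub_mul] at hP0
  unfold traceProjNonneg
  nlinarith

lemma monotoneOn_traceProjNonneg (hρ : ρ.PosSemidef) (hσ : σ.PosSemidef) :
    MonotoneOn (traceProjNonneg ρ σ) (Set.Ici 0) := by
  intro γ hγ γ' _ hγγ'
  rcases hγγ'.eq_or_lt with rfl | hlt
  · exact le_rfl
  set P := projNonneg (γ • σ - ρ)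
  set P' := projNonneg (γ' • σ - ρ)
  have h := trace_mul_re_le_trace_mul_projNonneg (isHermitian_smul_sub hρ.1 hσ.1 γ)
    (projNonneg_nonneg (γ' • σ - ρ)) (projNonneg_le_one _)
  have h' := trace_mul_re_le_trace_mul_projNonneg (isHermitian_smul_sub hρ.1 hσ.1 γ')
    (projNonneg_nonneg (γ • σ - ρ)) (projNonneg_le_one _)
  rw [re_trace_smul_sub_mul, re_trace_smul_sub_mul] at h h'
  -- adding the two optimality inequalities shows that `γ ↦ Tr[σ {ρ ≤ γσ}]` is nondecreasing
  have hσP : (σ * P).trace.re ≤ (σ * P').trace.re := by nlinarith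
  unfold traceProjNonneg
  nlinarith [mul_le_mul_of_nonneg_left hσP (Set.mem_Ici.mp hγ)]

lemma one_sub_re_trace_mul_projPos (hρ : ρ.PosSemidef) (hσ : σ.PosSemidef) (hρ1 : ρ.trace = 1)
    (c : ℝ) : 1 - (ρ * projPos (ρ - c • σ)).trace.re = traceProjNonneg ρ σ c := by
  rw [← neg_sub (c • σ), projPos_neg (isHermitian_smul_sub hρ.1 hσ.1 c), mul_sub, mul_one,
    trace_sub, Complex.sub_re, hρ1, Complex.one_re, sub_sub_cancel, traceProjNonneg]

end DensityMatrix

section RpowIntegral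

open Set

variable {f : ℝ → ℝ} {α : ℝ}

lemma integrableOn_rpow_mul_of_le_min (hα0 : 0 < α) (hα1 : α < 1)
    (hf : AEStronglyMeasurable f (volume.restrict (Ioi 0)))
    (hf0 : ∀ γ > 0, 0 ≤ f γ) (hf1 : ∀ γ > 0, f γ ≤ 1) (hfγ : ∀ γ > 0, f γ ≤ γ) :
    IntegrableOn (fun γ => γ ^ (α - 2) * f γ) (Ioi 0) := by
  have hmeas : AEStronglyMeasurable (fun γ => γ ^ (α - 2) * f γ) (volume.restrict (Ioi 0)) :=
    ((continuousOn_id.rpow_const fun γ hγ => .inl (ne_of_gt hγ)).aestronglyMeasurable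
      measurableSet_Ioi).mul hf
  have hnorm : ∀ γ > 0, ‖γ ^ (α - 2) * f γ‖ = γ ^ (α - 2) * f γ := fun γ hγ =>
    Real.norm_of_nonneg (mul_nonneg (Real.rpow_nonneg hγ.le _) (hf0 γ hγ))
  have hnear : IntegrableOn (fun γ => γ ^ (α - 2) * f γ) (Ioc 0 1) := by
    refine Integrable.mono' (g := fun γ => γ ^ (α - 1)) ?_
      (hmeas.mono_measure (Measure.restrict_mono Ioc_subset_Ioi_self le_rfl)) ?_
    · rw [← IntegrableOn, ← intervalIntegrable_iff_integrableOn_Ioc_of_le zero_le_one]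
      exact intervalIntegral.intervalIntegrable_rpow' (by linarith)
    · filter_upwards [ae_restrict_mem measurableSet_Ioc] with γ ⟨hγ, _⟩
      rw [hnorm γ hγ, show α - 1 = α - 2 + 1 by ring, Real.rpow_add_one hγ.ne']
      exact mul_le_mul_of_nonneg_left (hfγ γ hγ) (Real.rpow_nonneg hγ.le _)
  have htail : IntegrableOn (fun γ => γ ^ (α - 2) * f γ) (Ioi 1) := by
    refine Integrable.mono' (integrableOn_Ioi_rpow_of_lt (a := α - 2) (by linarith) zero_lt_one)
      (hmeas.mono_measure (Measure.restrict_mono (Ioi_subset_Ioi zero_le_one) le_rfl)) ?_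
    filter_upwards [ae_restrict_mem measurableSet_Ioi] with γ hγ
    have hγ0 : (0 : ℝ) < γ := zero_lt_one.trans hγ
    rw [hnorm γ hγ0]
    exact mul_le_of_le_one_right (Real.rpow_nonneg hγ0.le _) (hf1 γ hγ0)
  simpa only [Ioc_union_Ioi_eq_Ioi zero_le_one] using hnear.union htail

lemma le_rpow_mul_integral_rpow_mul (hα1 : α < 1) {c : ℝ} (hc : 0 < c)
    (hint : IntegrableOn (fun γ => γ ^ (α - 2) * f γ) (Ioi 0))
    (hf0 : ∀ γ > 0, 0 ≤ f γ) (hmono : MonotoneOn f (Ioi 0)) :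
    f c ≤ c ^ (1 - α) * ((1 - α) * ∫ γ in Ioi 0, γ ^ (α - 2) * f γ) := by
  have htail : ∫ γ in Ioi c, γ ^ (α - 2) = c ^ (α - 1) / (1 - α) := by
    rw [integral_Ioi_rpow_of_lt (by linarith) hc, show α - 2 + 1 = α - 1 by ring, neg_div,
      ← div_neg, neg_sub]
  have hmarkov : c ^ (α - 1) / (1 - α) * f c ≤ ∫ γ in Ioi 0, γ ^ (α - 2) * f γ :=
    calc c ^ (α - 1) / (1 - α) * f c = ∫ γ in Ioi c, γ ^ (α - 2) * f c := by
          rw [integral_mul_const, htail]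
      _ ≤ ∫ γ in Ioi c, γ ^ (α - 2) * f γ := by
          refine setIntegral_mono_on ((integrableOn_Ioi_rpow_of_lt (by linarith) hc).mul_const _)
            (hint.mono_set (Ioi_subset_Ioi hc.le)) measurableSet_Ioi fun γ hγ => ?_
          exact mul_le_mul_of_nonneg_left (hmono hc (hc.trans hγ) (le_of_lt hγ))
            (Real.rpow_nonneg (hc.trans hγ).le _)
      _ ≤ ∫ γ in Ioi 0, γ ^ (α - 2) * f γ := by
          refine setIntegral_mono_set hint ?_ (Ioi_subset_Ioi hc.le).eventuallyLE
          filter_upwards [ae_restrict_mem measurableSet_Ioi] with γ hγ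
          exact mul_nonneg (Real.rpow_nonneg (le_of_lt hγ) _) (hf0 γ hγ)
  have hcancel : c ^ (1 - α) * c ^ (α - 1) = 1 := by
    rw [← Real.rpow_add hc, sub_add_sub_cancel', sub_self, Real.rpow_zero]
  have hα : 0 < 1 - α := sub_pos.mpr hα1
  calc f c = c ^ (1 - α) * ((1 - α) * (c ^ (α - 1) / (1 - α) * f c)) := by
        field_simp
        linear_combination (-f c) * hcancel
    _ ≤ _ := by gcongr

end RpowIntegral

lemma le_exp_mul_log_add_log_of_le_rpow_mul {x c a Q : ℝ} (hc : 0 < c) (h : x ≤ c ^ a * Q) :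
    x ≤ Real.exp (a * Real.log c + Real.log Q) := by
  rcases le_or_gt Q 0 with hQ | hQ
  · exact h.trans ((mul_nonpos_of_nonneg_of_nonpos (Real.rpow_nonneg hc.le a) hQ).trans
      (Real.exp_pos _).le)
  · rwa [Real.exp_add, Real.exp_log hQ, mul_comm a, ← Real.rpow_def_of_pos hc]

/-- for density matrices and `0 < α < 1`, with
`Q_α(ρ‖σ) := (1-α) ∫₀^∞ γ^{α-2} Tr[ρ{ρ ≤ γσ}] dγ` and `D_α := log Q_α/(α-1)`, one has
`Tr[ρ{ρ ≤ cσ}] ≤ c^{1-α} Q_α(ρ‖σ)` for every `c > 0`, equivalently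
`1 - Tr[ρ{ρ > cσ}] ≤ exp((1-α) log c + (α-1) D_α(ρ‖σ))`. -/
theorem trace_rho_projNonneg_le {n : ℕ} (ρ σ : Matrix (Fin n) (Fin n) ℂ)
    (hρ : ρ.PosSemidef) (hσ : σ.PosSemidef) (hρ1 : ρ.trace = 1) (hσ1 : σ.trace = 1)
    (α : ℝ) (hα0 : 0 < α) (hα1 : α < 1) (c : ℝ) (hc : 0 < c) :
    (Matrix.trace (ρ * projNonneg (c • σ - ρ))).re
      ≤ c ^ (1 - α) *
        ((1 - α) * ∫ γ in Set.Ioi (0:ℝ),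
            γ ^ (α - 2) * (Matrix.trace (ρ * projNonneg (γ • σ - ρ))).re) ∧
    1 - (Matrix.trace (ρ * projPos (ρ - c • σ))).re
      ≤ Real.exp ((1 - α) * Real.log c
          + (α - 1) * (Real.log ((1 - α) * ∫ γ in Set.Ioi (0:ℝ),
              γ ^ (α - 2) * (Matrix.trace (ρ * projNonneg (γ • σ - ρ))).re) / (α - 1))) := by
  have hmono := (monotoneOn_traceProjNonneg hρ hσ).mono Set.Ioi_subset_Ici_self
  have hint := integrableOn_rpow_mul_of_le_min hα0 hα1
    (aemeasurable_restrict_of_monotoneOn measurableSet_Ioi hmono).aestronglyMeasurable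
    (fun γ _ => traceProjNonneg_nonneg hρ γ) (fun γ _ => traceProjNonneg_le_one hρ hρ1 γ)
    (fun γ hγ => traceProjNonneg_le_self hρ hσ hσ1 hγ.le)
  have hbound := le_rpow_mul_integral_rpow_mul hα1 hc hint
    (fun γ _ => traceProjNonneg_nonneg hρ γ) hmono
  refine ⟨hbound, ?_⟩
  rw [one_sub_re_trace_mul_projPos hρ hσ hρ1, mul_div_cancel₀ _ (sub_ne_zero.mpr hα1.ne)]
  exact le_exp_mul_log_add_log_of_le_rpow_mul hc hbound
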